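/- (Key Lemma) Let G/K be a compact homogeneous manifold with normalized measure μ and let (Φ, Ψ) be a normalized complementary pair of continuous Young functions such that (i) Φ ≺ Φ₀ where Φ₀(t) = t²/2, and (ii) Ψ′(t) ≤ c₀ t^p for all t ≥ 0, for some p ≥ 1 and c₀ > 0. Then there is a constant r̄₀ > 0, depending only on Φ and the ordering ≺ (and possibly on c₀ and p) but not on Λ, such that for every finite subset Λ ⊂ Ĝ₀ and every trigonometric polynomial f_Λ(x) = ∑_{π∈Λ} d_π ∑_{i=1}^{d_π} ∑_{j=1}^{k_π} c^π_{ij} π_{ij}(x) with c^π_{ij} ∈ ℂ, one has N_Ψ(F_{f_Λ}) ≤ r̄₀ · N_Φ(f_Λ). -/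

import Mathlib

open MeasureTheory Filter
open scoped ENNReal NNReal ComplexConjugate

noncomputable section

/-- The Hilbert–Schmidt (Frobenius) norm of a complex matrix. -/
def hsNorm {n : ℕ} (A : Matrix (Fin n) (Fin n) ℂ) : ℝ :=
  Real.sqrt (∑ i, ∑ j, ‖A i j‖ ^ 2)

/-- The Schatten `p`-norm of a complex matrix (for finite `p`):
the `ℓ^p` norm of the singular values. -/
def schNorm {n : ℕ} (p : ℝ) (A : Matrix (Fin n) (Fin n) ℂ) : ℝ :=
  (∑ i, Real.sqrt ((Matrix.isHermitian_conjTranspose_mul_self A).eigenvalues i) ^ p) ^ (1 / p)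

/-- The operator norm of a complex matrix acting on Euclidean space. -/
def matOpNorm {n : ℕ} (A : Matrix (Fin n) (Fin n) ℂ) : ℝ :=
  ‖LinearMap.toContinuousLinearMap (Matrix.toEuclideanLin A)‖

/-- The `ℓ^p(Ĝ₀)` norm. -/
def lpNorm {ι : Type*} (d k : ι → ℕ) (p : ℝ≥0∞)
    (σ : (π : ι) → Matrix (Fin (d π)) (Fin (d π)) ℂ) : ℝ≥0∞ :=
  if p = ∞ then ⨆ π, ENNReal.ofReal (hsNorm (σ π) / Real.sqrt (k π))
  else (∑' π, (d π : ℝ≥0∞) * (k π : ℝ≥0∞) ^ (p.toReal * (1 / p.toReal - 1 / 2)) *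
    ENNReal.ofReal (hsNorm (σ π)) ^ p.toReal) ^ (1 / p.toReal)

/-- The Schatten-based `ℓ^p_sch(Ĝ₀)` norm. -/
def lpSchNorm {ι : Type*} (d : ι → ℕ) (p : ℝ≥0∞)
    (σ : (π : ι) → Matrix (Fin (d π)) (Fin (d π)) ℂ) : ℝ≥0∞ :=
  if p = ∞ then ⨆ π, ENNReal.ofReal (matOpNorm (σ π))
  else (∑' π, (d π : ℝ≥0∞) * ENNReal.ofReal (schNorm p.toReal (σ π)) ^ p.toReal) ^ (1 / p.toReal)

/-- A Young function: a nonzero convex function on `[0,∞)` vanishing at `0`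
and tending to `∞` at `∞`. -/
structure IsYoungFunction (Φ : ℝ → ℝ) : Prop where
  zero : Φ 0 = 0
  nonneg : ∀ x, 0 ≤ x → 0 ≤ Φ x
  convexOn : ConvexOn ℝ (Set.Ici 0) Φ
  ne_zero : ∃ x, 0 ≤ x ∧ Φ x ≠ 0
  tendsto_atTop : Tendsto Φ atTop atTop

/-- `(Φ, Ψ)` is a complementary pair of Young functions:
`Ψ y = sup {x y - Φ x : x ≥ 0}`. -/
def IsComplementaryPair (Φ Ψ : ℝ → ℝ) : Prop :=
  IsYoungFunction Φ ∧ IsYoungFunction Ψ ∧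
    ∀ y, 0 ≤ y → IsLUB {z : ℝ | ∃ x, 0 ≤ x ∧ z = x * y - Φ x} (Ψ y)

/-- The ordering `Φ₁ ≺ Φ₂` on Young functions. -/
def YoungPrec (Φ₁ Φ₂ : ℝ → ℝ) : Prop :=
  ∃ a b c e x₀ x₁ : ℝ, 0 < a ∧ 0 < b ∧ 0 < c ∧ 0 < e ∧ 0 < x₀ ∧ 0 < x₁ ∧
    (∀ x, x₀ ≤ x → Φ₁ (a * x) ≤ b * Φ₂ x) ∧
    (∀ x, 0 ≤ x → x ≤ x₁ → Φ₂ (c * x) ≤ e * Φ₁ x)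

/-- Luxemburg (gauge) norm of a real-valued function. -/
def luxNormR {X : Type*} [MeasurableSpace X] (μ : Measure X) (Φ : ℝ → ℝ) (f : X → ℝ) : ℝ :=
  sInf {lam : ℝ | 0 < lam ∧
    ∫⁻ x, ENNReal.ofReal (Φ (|f x| / lam)) ∂μ ≤ ENNReal.ofReal (Φ 1)}

/-- Luxemburg (gauge) norm of a complex-valued function. -/
def luxNorm {X : Type*} [MeasurableSpace X] (μ : Measure X) (Φ : ℝ → ℝ) (f : X → ℂ) : ℝ :=
  luxNormR μ Φ fun x => ‖f x‖

/-- Membership in the Orlicz space `L^Φ`. -/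
def MemOrlicz {X : Type*} [MeasurableSpace X] (μ : Measure X) (Φ : ℝ → ℝ) (f : X → ℂ) : Prop :=
  AEStronglyMeasurable f μ ∧
    ∃ a, 0 < a ∧ ∫⁻ x, ENNReal.ofReal (Φ (a * ‖f x‖)) ∂μ < ⊤

/-- Gauge norm of a function on `Ĝ₀` weighted by `k_π d_π`. -/
def gaugeNorm {ι : Type*} (d k : ι → ℕ) (Φ : ℝ → ℝ) (F : ι → ℝ) : ℝ :=
  sInf {lam : ℝ | 0 < lam ∧
    ∑' π, ENNReal.ofReal (Φ (F π / lam)) * (k π : ℝ≥0∞) * (d π : ℝ≥0∞) ≤ ENNReal.ofReal (Φ 1)}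

/-- Membership in the Orlicz sequence space `ℓ^Φ(Ĝ₀)`. -/
def MemOrliczSeq {ι : Type*} (d k : ι → ℕ) (Φ : ℝ → ℝ) (F : ι → ℝ) : Prop :=
  ∃ a, 0 < a ∧ ∑' π, ENNReal.ofReal (Φ (a * F π)) * (k π : ℝ≥0∞) * (d π : ℝ≥0∞) < ⊤

/-- The Fourier coefficient `f̂(π) = ∫ f(x) π(x)^* dμ(x)`. -/
def fCoeff {X : Type*} [MeasurableSpace X] {ι : Type*} (μ : Measure X) {d : ι → ℕ}
    (E : (π : ι) → X → Matrix (Fin (d π)) (Fin (d π)) ℂ) (f : X → ℂ) (π : ι) :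
    Matrix (Fin (d π)) (Fin (d π)) ℂ :=
  Matrix.of fun i j => ∫ x, f x * conj (E π x j i) ∂μ

/-- `F_f(π) = k_π^{-1/2} ‖f̂(π)‖_{HS}`. -/
def Ff {X : Type*} [MeasurableSpace X] {ι : Type*} (μ : Measure X) {d : ι → ℕ} (k : ι → ℕ)
    (E : (π : ι) → X → Matrix (Fin (d π)) (Fin (d π)) ℂ) (f : X → ℂ) (π : ι) : ℝ :=
  hsNorm (fCoeff μ E f π) / Real.sqrt (k π)

/-- The structural data of the matrix coefficients `π_{ij}` (with columns `j > k_π` set to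
zero) of the class I representations of `G` relative to `K`, viewed as functions on the
compact homogeneous manifold `X = G/K` with normalized measure `μ`: positivity of
dimensions, measurability, the vanishing-column convention, the trace identity
`∑_{ij} |π(x)_{ij}|² = k_π`, Peter–Weyl orthogonality, and Parseval's identity. -/
structure RepSystem {X : Type*} [MeasurableSpace X] {ι : Type*} (μ : Measure X)
    (d k : ι → ℕ) (E : (π : ι) → X → Matrix (Fin (d π)) (Fin (d π)) ℂ) : Prop where
  d_pos : ∀ π, 0 < d π
  k_pos : ∀ π, 0 < k π
  k_le_d : ∀ π, k π ≤ d π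
  measurable : ∀ π i j, Measurable fun x => E π x i j
  col_zero : ∀ (π : ι) (x : X) (i j : Fin (d π)), k π ≤ (j : ℕ) → E π x i j = 0
  trace_id : ∀ π x, ∑ i, ∑ j, ‖E π x i j‖ ^ 2 = (k π : ℝ)
  orth : ∀ π (i j i' j' : Fin (d π)), (j : ℕ) < k π → (j' : ℕ) < k π →
      ∫ x, E π x i j * conj (E π x i' j') ∂μ =
        if i = i' ∧ j = j' then ((d π : ℂ))⁻¹ else 0
  orth_ne : ∀ π π', π ≠ π' → ∀ i j i' j',
      ∫ x, E π x i j * conj (E π' x i' j') ∂μ = 0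
  parseval : ∀ f : X → ℂ, MemLp f 2 μ →
      HasSum (fun π => (d π : ℝ) * ∑ i, ∑ j, ‖fCoeff μ E f π i j‖ ^ 2)
        (∫ x, ‖f x‖ ^ 2 ∂μ)

/-- The trigonometric polynomial `f_Λ(x) = ∑_{π∈Λ} d_π ∑_{i,j} c^π_{ij} π_{ij}(x)`. -/
def trigPoly {X : Type*} {ι : Type*} {d : ι → ℕ}
    (E : (π : ι) → X → Matrix (Fin (d π)) (Fin (d π)) ℂ)
    (Λ : Finset ι) (c : (π : ι) → Matrix (Fin (d π)) (Fin (d π)) ℂ) : X → ℂ :=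
  fun x => ∑ π ∈ Λ, (d π : ℂ) * ∑ i, ∑ j, c π i j * E π x i j

/-- The partial Fourier series `f̃_Λ` of `f`, whose Fourier coefficients agree with those
of `f` on `Λ` and vanish outside `Λ`. -/
def fourierProj {X : Type*} [MeasurableSpace X] {ι : Type*} (μ : Measure X) {d : ι → ℕ}
    (E : (π : ι) → X → Matrix (Fin (d π)) (Fin (d π)) ℂ) (Λ : Finset ι) (f : X → ℂ) :
    X → ℂ :=
  trigPoly E Λ fun π => (fCoeff μ E f π).transpose


/-!
Rescale `f` so that its modular `∫ Φ(|u|)` is at most `Φ(1)`. Pairing `u` with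
`∑ û(π)ᵢⱼ π_{ji}` and applying Young's inequality gives `F_u(π) ≤ ∫ Φ(|u|) + Ψ(1) ≤ 1`. The bound
`Ψ' ≤ c₀ t^p` gives `Ψ(y) ≲ y^{p+1}`, hence `Φ(x) ≥ β x^{1+1/p}` by Young's inequality, and it
suffices to bound `∑ k_π d_π F_u(π)^{p+1}` uniformly in `u`. For `p = 1` this is Bessel's
inequality. For `p > 1`, sort the `π` by the dyadic size `F_u(π) ≈ 2^{-j}` and cut off the
values of `u` with `|u|^{1/p} > 2^{j+2} Φ(1)/β`: the tail has `L¹` norm at most `2^{-j-2}`, so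
the truncation still carries half of `F_u(π)` and Bessel's inequality counts these `π`. Summing
over `j` leaves a geometric series in the truncations that is dominated pointwise by `Φ(|u|)`.
-/

namespace IsYoungFunction

variable {Φ : ℝ → ℝ}

theorem le_div_mul (hΦ : IsYoungFunction Φ) {x y : ℝ} (hx : 0 ≤ x) (hy : 0 < y) (hxy : x ≤ y) :
    Φ x ≤ x / y * Φ y := by
  have h := hΦ.convexOn.2 (Set.mem_Ici.2 le_rfl) (Set.mem_Ici.2 hy.le)
    (sub_nonneg.2 ((div_le_one hy).2 hxy)) (div_nonneg hx hy.le) (sub_add_cancel 1 (x / y))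
  simpa [hΦ.zero, div_mul_cancel₀ x hy.ne'] using h

theorem monotoneOn (hΦ : IsYoungFunction Φ) : MonotoneOn Φ (Set.Ici 0) := by
  intro x hx y hy hxy
  rcases hxy.eq_or_lt with rfl | hlt
  · rfl
  calc Φ x ≤ x / y * Φ y := hΦ.le_div_mul hx (lt_of_le_of_lt hx hlt) hxy
    _ ≤ Φ y := mul_le_of_le_one_left (hΦ.nonneg y hy) ((div_le_one (lt_of_le_of_lt hx hlt)).2 hxy)

theorem integrable_comp_norm (hΦ : IsYoungFunction Φ) {X E : Type*} [MeasurableSpace X]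
    [NormedAddCommGroup E] {μ : Measure X} [IsFiniteMeasure μ] {u : X → E}
    (hu : AEStronglyMeasurable u μ) {B : ℝ} (hub : ∀ x, ‖u x‖ ≤ B) :
    Integrable (fun x => Φ ‖u x‖) μ := by
  have hmono : Monotone fun s => Φ (max s 0) := fun s t hst =>
    hΦ.monotoneOn (le_max_right s 0) (le_max_right t 0) (max_le_max_right 0 hst)
  refine Integrable.of_bound ?_ (Φ B) (ae_of_all _ fun x => ?_)
  · have h := (hmono.measurable.comp_aemeasurable hu.norm.aemeasurable).aestronglyMeasurable
    simpa only [Function.comp_def, max_eq_left (norm_nonneg _)] using h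
  · rw [Real.norm_of_nonneg (hΦ.nonneg _ (norm_nonneg _))]
    exact hΦ.monotoneOn (norm_nonneg _) ((norm_nonneg _).trans (hub x)) (hub x)

end IsYoungFunction

theorem MonotoneOn.exists_mem_Ioo_differentiableAt {f : ℝ → ℝ} {a b : ℝ}
    (hf : MonotoneOn f (Set.Ioo a b)) (hab : a < b) :
    ∃ σ ∈ Set.Ioo a b, DifferentiableAt ℝ f σ := by
  have : (ae (volume.restrict (Set.Ioo a b))).NeBot := ae_neBot.2 (by simp [hab])
  obtain ⟨σ, hσ, hd⟩ := ((ae_restrict_mem measurableSet_Ioo).and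
    (hf.ae_differentiableWithinAt measurableSet_Ioo)).exists
  exact ⟨σ, hσ, hd.differentiableAt (Ioo_mem_nhds hσ.1 hσ.2)⟩

namespace IsYoungFunction

variable {Ψ : ℝ → ℝ}

theorem le_mul_rpow_of_deriv_le (hΨ : IsYoungFunction Ψ) {p c : ℝ} (hp : 0 ≤ p) (hc : 0 ≤ c)
    (hΨ' : ∀ t, 0 ≤ t → deriv Ψ t ≤ c * t ^ p) {y : ℝ} (hy : 0 ≤ y) :
    Ψ y ≤ c * 2 ^ p * y ^ (p + 1) := by
  rcases hy.eq_or_lt with rfl | hy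
  · simp [hΨ.zero, Real.zero_rpow (by linarith : p + 1 ≠ 0)]
  obtain ⟨σ, ⟨hyσ, hσy⟩, hdiff⟩ := MonotoneOn.exists_mem_Ioo_differentiableAt
    (hΨ.monotoneOn.mono fun t ht => le_of_lt (hy.trans ht.1)) (by linarith : y < 2 * y)
  have hσ : 0 < σ := hy.trans hyσ
  calc Ψ y ≤ y / σ * Ψ σ := hΨ.le_div_mul hy.le hσ hyσ.le
    _ = y * slope Ψ 0 σ := by rw [slope_def_field, hΨ.zero]; ring
    _ ≤ y * deriv Ψ σ := by
      gcongr
      exact hΨ.convexOn.slope_le_deriv (Set.mem_Ici.2 le_rfl) (Set.mem_Ici.2 hσ.le) hσ hdiff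
    _ ≤ y * (c * (2 * y) ^ p) := by
      gcongr
      exact (hΨ' σ hσ.le).trans (by gcongr)
    _ = c * 2 ^ p * y ^ (p + 1) := by
      rw [Real.mul_rpow zero_le_two hy.le, Real.rpow_add_one hy.ne']; ring

end IsYoungFunction

namespace IsComplementaryPair

variable {Φ Ψ : ℝ → ℝ}

theorem mul_le_add (hpair : IsComplementaryPair Φ Ψ) {a b : ℝ} (ha : 0 ≤ a) (hb : 0 ≤ b) :
    a * b ≤ Φ a + Ψ b := by
  linarith [(hpair.2.2 b hb).1 ⟨a, ha, rfl⟩]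

/-- Young's inequality at `y = (x / (c (p+1)))^(1/p)`, the point where `x ≈ Ψ'(y)`. -/
theorem mul_rpow_le_of_le_mul_rpow (hpair : IsComplementaryPair Φ Ψ) {p c : ℝ} (hp : 0 < p)
    (hc : 0 < c) (hΨ : ∀ y, 0 ≤ y → Ψ y ≤ c * y ^ (p + 1)) {x : ℝ} (hx : 0 ≤ x) :
    p / (p + 1) * (c * (p + 1)) ^ (-p⁻¹) * x ^ (1 + p⁻¹) ≤ Φ x := by
  rcases hx.eq_or_lt with rfl | hx
  · rw [Real.zero_rpow (by positivity), mul_zero, hpair.1.zero]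
  set y := (x / (c * (p + 1))) ^ p⁻¹ with hy_def
  have hy : 0 < y := by positivity
  have hyp : y ^ p = x / (c * (p + 1)) := by
    rw [hy_def, ← Real.rpow_mul (by positivity), inv_mul_cancel₀ hp.ne', Real.rpow_one]
  have hxy : x * y = x ^ (1 + p⁻¹) * (c * (p + 1)) ^ (-p⁻¹) := by
    rw [hy_def, Real.div_rpow hx.le (by positivity), Real.rpow_add hx, Real.rpow_one,
      Real.rpow_neg (by positivity)]
    ring
  have hΨy : Ψ y ≤ x * y / (p + 1) := by
    calc Ψ y ≤ c * y ^ (p + 1) := hΨ y hy.le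
      _ = x * y / (p + 1) := by rw [Real.rpow_add_one hy.ne', hyp]; field_simp
  have hyoung := hpair.mul_le_add hx.le hy.le
  calc p / (p + 1) * (c * (p + 1)) ^ (-p⁻¹) * x ^ (1 + p⁻¹)
      = x * y - x * y / (p + 1) := by rw [hxy]; field_simp; ring
    _ ≤ Φ x := by linarith

end IsComplementaryPair

section HilbertSchmidt

attribute [local instance] Matrix.frobeniusNormedAddCommGroup Matrix.frobeniusNormedSpace

variable {n : ℕ}

theorem hsNorm_eq_norm (A : Matrix (Fin n) (Fin n) ℂ) : hsNorm A = ‖A‖ := by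
  rw [hsNorm, Matrix.frobenius_norm_def, Real.sqrt_eq_rpow]
  norm_num

theorem hsNorm_nonneg (A : Matrix (Fin n) (Fin n) ℂ) : 0 ≤ hsNorm A := Real.sqrt_nonneg _

theorem hsNorm_sq (A : Matrix (Fin n) (Fin n) ℂ) : hsNorm A ^ 2 = ∑ i, ∑ j, ‖A i j‖ ^ 2 :=
  Real.sq_sqrt (by positivity)

theorem hsNorm_add_le (A B : Matrix (Fin n) (Fin n) ℂ) : hsNorm (A + B) ≤ hsNorm A + hsNorm B := by
  simpa only [hsNorm_eq_norm] using norm_add_le A B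

theorem hsNorm_smul (a : ℂ) (A : Matrix (Fin n) (Fin n) ℂ) : hsNorm (a • A) = ‖a‖ * hsNorm A := by
  simpa only [hsNorm_eq_norm] using norm_smul a A

end HilbertSchmidt

section FourierCoefficients

variable {X ι : Type*} [MeasurableSpace X] {μ : Measure X} {d k : ι → ℕ}
  {E : (π : ι) → X → Matrix (Fin (d π)) (Fin (d π)) ℂ}

theorem fCoeff_const_mul (a : ℂ) (u : X → ℂ) (π : ι) :
    fCoeff μ E (fun x => a * u x) π = a • fCoeff μ E u π := by
  ext i j
  simp only [fCoeff, Matrix.of_apply, Matrix.smul_apply, smul_eq_mul, ← integral_const_mul,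
    mul_assoc]

theorem Ff_const_mul (a : ℂ) (u : X → ℂ) (π : ι) :
    Ff μ k E (fun x => a * u x) π = ‖a‖ * Ff μ k E u π := by
  rw [Ff, Ff, fCoeff_const_mul, hsNorm_smul, mul_div_assoc]

theorem Ff_nonneg (u : X → ℂ) (π : ι) : 0 ≤ Ff μ k E u π :=
  div_nonneg (hsNorm_nonneg _) (Real.sqrt_nonneg _)

namespace RepSystem

theorem norm_apply_le_sqrt (hsys : RepSystem μ d k E) (π : ι) (x : X) (i j : Fin (d π)) :
    ‖E π x i j‖ ≤ √(k π) := by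
  refine Real.le_sqrt_of_sq_le ?_
  rw [← hsys.trace_id π x]
  calc ‖E π x i j‖ ^ 2 ≤ ∑ j', ‖E π x i j'‖ ^ 2 :=
        Finset.single_le_sum (f := fun j' => ‖E π x i j'‖ ^ 2) (fun j' _ => by positivity)
          (Finset.mem_univ j)
    _ ≤ ∑ i', ∑ j', ‖E π x i' j'‖ ^ 2 :=
        Finset.single_le_sum (f := fun i' => ∑ j', ‖E π x i' j'‖ ^ 2)
          (fun i' _ => by positivity) (Finset.mem_univ i)

theorem integrable_mul_conj (hsys : RepSystem μ d k E) {u : X → ℂ} (hu : Integrable u μ)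
    (π : ι) (i j : Fin (d π)) : Integrable (fun x => u x * conj (E π x i j)) μ :=
  hu.mul_bdd (Complex.continuous_conj.measurable.comp (hsys.measurable π i j)).aestronglyMeasurable
    (ae_of_all _ fun x => by simpa using hsys.norm_apply_le_sqrt π x i j)

theorem integrable_apply (hsys : RepSystem μ d k E) [IsFiniteMeasure μ] (π : ι)
    (i j : Fin (d π)) : Integrable (fun x => E π x i j) μ :=
  .of_bound (hsys.measurable π i j).aestronglyMeasurable _
    (ae_of_all _ (hsys.norm_apply_le_sqrt π · i j))

theorem fCoeff_add (hsys : RepSystem μ d k E) {v w : X → ℂ} (hv : Integrable v μ)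
    (hw : Integrable w μ) (π : ι) : fCoeff μ E (v + w) π = fCoeff μ E v π + fCoeff μ E w π := by
  ext i j
  simp only [fCoeff, Matrix.of_apply, Matrix.add_apply, Pi.add_apply, add_mul]
  exact integral_add (hsys.integrable_mul_conj hv π j i) (hsys.integrable_mul_conj hw π j i)

theorem Ff_add_le (hsys : RepSystem μ d k E) {v w : X → ℂ} (hv : Integrable v μ)
    (hw : Integrable w μ) (π : ι) : Ff μ k E (v + w) π ≤ Ff μ k E v π + Ff μ k E w π := by
  rw [Ff, Ff, Ff, hsys.fCoeff_add hv hw, ← add_div]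
  gcongr
  exact hsNorm_add_le _ _

theorem norm_sum_mul_le (hsys : RepSystem μ d k E) (π : ι) (x : X)
    (M : Matrix (Fin (d π)) (Fin (d π)) ℂ) :
    ‖∑ i, ∑ j, M i j * E π x j i‖ ≤ hsNorm M * √(k π) := by
  have hE : ∑ i, ∑ j, ‖E π x j i‖ ^ 2 = k π := by rw [Finset.sum_comm, hsys.trace_id]
  calc ‖∑ i, ∑ j, M i j * E π x j i‖ ≤ ∑ i, ∑ j, ‖M i j‖ * ‖E π x j i‖ := by
        refine (norm_sum_le _ _).trans (Finset.sum_le_sum fun i _ => ?_)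
        refine (norm_sum_le _ _).trans_eq ?_
        simp only [norm_mul]
    _ = ∑ ij : Fin (d π) × Fin (d π), ‖M ij.1 ij.2‖ * ‖E π x ij.2 ij.1‖ :=
        (Fintype.sum_prod_type (fun ij : Fin (d π) × Fin (d π) =>
          ‖M ij.1 ij.2‖ * ‖E π x ij.2 ij.1‖)).symm
    _ ≤ √(∑ ij : Fin (d π) × Fin (d π), ‖M ij.1 ij.2‖ ^ 2) *
          √(∑ ij : Fin (d π) × Fin (d π), ‖E π x ij.2 ij.1‖ ^ 2) :=
        Real.sum_mul_le_sqrt_mul_sqrt _ _ _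
    _ = hsNorm M * √(k π) := by rw [Fintype.sum_prod_type, Fintype.sum_prod_type, hE, hsNorm]

theorem integral_mul_conj_sum_fCoeff (hsys : RepSystem μ d k E) {u : X → ℂ}
    (hu : Integrable u μ) (π : ι) :
    ∫ x, u x * conj (∑ i, ∑ j, fCoeff μ E u π i j * E π x j i) ∂μ =
      ((hsNorm (fCoeff μ E u π) ^ 2 : ℝ) : ℂ) := by
  have hint : ∀ i j, Integrable
      (fun x => conj (fCoeff μ E u π i j) * (u x * conj (E π x j i))) μ :=
    fun i j => (hsys.integrable_mul_conj hu π j i).const_mul _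
  simp_rw [map_sum, map_mul, Finset.mul_sum, mul_left_comm (u _)]
  rw [integral_finsetSum _ fun i _ => integrable_finsetSum _ fun j _ => hint i j]
  simp_rw [integral_finsetSum _ fun j _ => hint _ j, integral_const_mul, hsNorm_sq]
  push_cast
  refine Finset.sum_congr rfl fun i _ => Finset.sum_congr rfl fun j _ => ?_
  rw [← Complex.conj_mul', fCoeff, Matrix.of_apply]

/-- Duality: `‖û(π)‖²_HS` is the pairing of `u` with `∑ û(π)ᵢⱼ π_{ji}`, a function of sup norm at
most `‖û(π)‖_HS √k_π`. -/
theorem Ff_le_of_forall_integral_le (hsys : RepSystem μ d k E) {u : X → ℂ} (hu : Integrable u μ)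
    {A : ℝ} (hA : ∀ g : X → ℂ, Measurable g → (∀ x, ‖g x‖ ≤ 1) → ∫ x, ‖u x‖ * ‖g x‖ ∂μ ≤ A)
    (π : ι) : Ff μ k E u π ≤ A := by
  set M := fCoeff μ E u π
  have hk : 0 < √(k π) := Real.sqrt_pos.2 (Nat.cast_pos.2 (hsys.k_pos π))
  rcases (hsNorm_nonneg M).eq_or_lt with hM | hM
  · rw [Ff, ← hM, zero_div]
    simpa using hA 0 measurable_const (by simp)
  set s := hsNorm M * √(k π)
  have hs : 0 < s := mul_pos hM hk
  set g₀ : X → ℂ := fun x => ∑ i, ∑ j, M i j * E π x j i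
  have hg₀ : Measurable g₀ := Finset.measurable_sum _ fun i _ =>
    Finset.measurable_sum _ fun j _ => (hsys.measurable π j i).const_mul _
  have key : hsNorm M ^ 2 ≤ s * A := by
    calc hsNorm M ^ 2 = ‖∫ x, u x * conj (g₀ x) ∂μ‖ := by
          rw [hsys.integral_mul_conj_sum_fCoeff hu π, Complex.norm_real,
            Real.norm_of_nonneg (sq_nonneg _)]
      _ ≤ ∫ x, ‖u x‖ * ‖g₀ x‖ ∂μ := by
          refine (norm_integral_le_integral_norm _).trans_eq ?_
          simp only [norm_mul, Complex.norm_conj]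
      _ = s * ∫ x, ‖u x‖ * ‖(s⁻¹ : ℂ) * g₀ x‖ ∂μ := by
          rw [← integral_const_mul]
          congr 1 with x
          rw [norm_mul, norm_inv, Complex.norm_real, Real.norm_of_nonneg hs.le]
          field_simp
      _ ≤ s * A := by
          refine mul_le_mul_of_nonneg_left (hA _ (hg₀.const_mul _) fun x => ?_) hs.le
          rw [norm_mul, norm_inv, Complex.norm_real, Real.norm_of_nonneg hs.le,
            inv_mul_le_one₀ hs]
          exact hsys.norm_sum_mul_le π x M
  rw [Ff, div_le_iff₀ hk]
  nlinarith

theorem Ff_le_integral_norm (hsys : RepSystem μ d k E) {u : X → ℂ} (hu : Integrable u μ)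
    (π : ι) : Ff μ k E u π ≤ ∫ x, ‖u x‖ ∂μ :=
  hsys.Ff_le_of_forall_integral_le hu (fun _ _ hg => integral_mono_of_nonneg
    (ae_of_all _ fun x => by positivity) hu.norm
    (ae_of_all _ fun x => mul_le_of_le_one_right (norm_nonneg _) (hg x))) π

theorem Ff_le_integral_add {Φ Ψ : ℝ → ℝ} [IsProbabilityMeasure μ] (hsys : RepSystem μ d k E)
    (hpair : IsComplementaryPair Φ Ψ) {u : X → ℂ} (hu : Integrable u μ)
    (hΦu : Integrable (fun x => Φ ‖u x‖) μ) (π : ι) :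
    Ff μ k E u π ≤ ∫ x, Φ ‖u x‖ ∂μ + Ψ 1 := by
  refine hsys.Ff_le_of_forall_integral_le hu (fun g _ hg => ?_) π
  calc ∫ x, ‖u x‖ * ‖g x‖ ∂μ ≤ ∫ x, Φ ‖u x‖ + Ψ 1 ∂μ := by
        refine integral_mono_of_nonneg (ae_of_all _ fun x => by positivity)
          (hΦu.add (integrable_const _)) (ae_of_all _ fun x => ?_)
        calc ‖u x‖ * ‖g x‖ ≤ Φ ‖u x‖ + Ψ ‖g x‖ :=
              hpair.mul_le_add (norm_nonneg _) (norm_nonneg _)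
          _ ≤ Φ ‖u x‖ + Ψ 1 := by
              gcongr
              exact hpair.2.1.monotoneOn (norm_nonneg _) (Set.mem_Ici.2 zero_le_one) (hg x)
    _ = ∫ x, Φ ‖u x‖ ∂μ + Ψ 1 := by simp [integral_add hΦu (integrable_const _)]

theorem sum_mul_Ff_sq_le (hsys : RepSystem μ d k E) {u : X → ℂ} (hu : MemLp u 2 μ)
    (S : Finset ι) : ∑ π ∈ S, (k π * d π : ℝ) * Ff μ k E u π ^ 2 ≤ ∫ x, ‖u x‖ ^ 2 ∂μ := by
  refine (Finset.sum_congr rfl fun π _ => ?_).trans_le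
    (sum_le_hasSum S (fun π _ => by positivity) (hsys.parseval u hu))
  have hk : (0 : ℝ) < k π := Nat.cast_pos.2 (hsys.k_pos π)
  rw [Ff, div_pow, Real.sq_sqrt hk.le, hsNorm_sq]
  field_simp

theorem measurable_trigPoly (hsys : RepSystem μ d k E) (Λ : Finset ι)
    (c : (π : ι) → Matrix (Fin (d π)) (Fin (d π)) ℂ) : Measurable (trigPoly E Λ c) :=
  Finset.measurable_sum _ fun π _ => (Finset.measurable_sum _ fun i _ =>
    Finset.measurable_sum _ fun j _ => (hsys.measurable π i j).const_mul _).const_mul _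

theorem exists_norm_trigPoly_le (hsys : RepSystem μ d k E) (Λ : Finset ι)
    (c : (π : ι) → Matrix (Fin (d π)) (Fin (d π)) ℂ) :
    ∃ B, 0 < B ∧ ∀ x, ‖trigPoly E Λ c x‖ ≤ B := by
  refine ⟨∑ π ∈ Λ, d π * ∑ i, ∑ j, ‖c π i j‖ * √(k π) + 1, by positivity, fun x => ?_⟩
  refine (norm_sum_le _ _).trans (le_add_of_le_of_nonneg (Finset.sum_le_sum fun π _ => ?_)
    zero_le_one)
  rw [norm_mul, Complex.norm_natCast]
  gcongr
  refine (norm_sum_le _ _).trans (Finset.sum_le_sum fun i _ => ?_)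
  refine (norm_sum_le _ _).trans (Finset.sum_le_sum fun j _ => ?_)
  rw [norm_mul]
  gcongr
  exact hsys.norm_apply_le_sqrt π x i j

theorem Ff_trigPoly_of_notMem [IsFiniteMeasure μ] (hsys : RepSystem μ d k E) {Λ : Finset ι}
    (c : (π : ι) → Matrix (Fin (d π)) (Fin (d π)) ℂ) {π : ι} (hπ : π ∉ Λ) :
    Ff μ k E (trigPoly E Λ c) π = 0 := by
  have hint : ∀ π' (i' j' : Fin (d π')) (i j : Fin (d π)),
      Integrable (fun x => E π' x i' j' * conj (E π x j i)) μ :=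
    fun π' i' j' i j => hsys.integrable_mul_conj (hsys.integrable_apply π' i' j') π j i
  have hcoeff : fCoeff μ E (trigPoly E Λ c) π = 0 := by
    ext i j
    simp only [fCoeff, trigPoly, Matrix.of_apply, Matrix.zero_apply, Finset.sum_mul,
      Finset.mul_sum, mul_assoc]
    have hint' : ∀ π' (i' j' : Fin (d π')), Integrable
        (fun x => (d π' : ℂ) * (c π' i' j' * (E π' x i' j' * conj (E π x j i)))) μ :=
      fun π' i' j' => ((hint π' i' j' i j).const_mul _).const_mul _
    rw [integral_finsetSum _ fun π' _ =>
      integrable_finsetSum _ fun i' _ => integrable_finsetSum _ fun j' _ => hint' π' i' j']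
    refine Finset.sum_eq_zero fun π' hπ' => ?_
    rw [integral_finsetSum _ fun i' _ => integrable_finsetSum _ fun j' _ => hint' π' i' j']
    refine Finset.sum_eq_zero fun i' _ => ?_
    rw [integral_finsetSum _ fun j' _ => hint' π' i' j']
    refine Finset.sum_eq_zero fun j' _ => ?_
    rw [integral_const_mul, integral_const_mul,
      hsys.orth_ne π' π (ne_of_mem_of_not_mem hπ' hπ) i' j' j i, mul_zero, mul_zero]
  rw [Ff, hcoeff, hsNorm, Finset.sum_eq_zero fun i _ => Finset.sum_eq_zero fun j _ => by simp,
    Real.sqrt_zero, zero_div]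

end RepSystem

end FourierCoefficients

theorem exists_rpow_le_mul_sq {p t : ℝ} (hp : 0 < p + 1) (ht0 : 0 ≤ t) (ht1 : t ≤ 1)
    {a b : ℕ → ℝ} (hab : ∀ j, t ≤ a j + b j) (hb : ∀ j, b j ≤ (1 / 2) ^ (j + 2)) :
    ∃ j, t ^ (p + 1) ≤ 16 * ((1 / 2 : ℝ) ^ (p - 1)) ^ j * a j ^ 2 := by
  rcases ht0.eq_or_lt with rfl | ht
  · exact ⟨0, by rw [Real.zero_rpow hp.ne']; positivity⟩
  obtain ⟨j, hlt, hle⟩ := exists_nat_pow_near_of_lt_one ht ht1 one_half_pos one_half_lt_one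
  refine ⟨j, ?_⟩
  have ha : (1 / 2 : ℝ) ^ (j + 2) ≤ a j := by linarith [hab j, hb j, pow_succ (1 / 2 : ℝ) (j + 1)]
  have hpow : ((1 / 2 : ℝ) ^ (p + 1)) = (1 / 2) ^ (p - 1) * (1 / 2) ^ 2 := by
    rw [← Real.rpow_natCast, ← Real.rpow_add one_half_pos]; norm_num; ring_nf
  calc t ^ (p + 1) ≤ ((1 / 2 : ℝ) ^ j) ^ (p + 1) := Real.rpow_le_rpow ht.le hle hp.le
    _ = 16 * ((1 / 2 : ℝ) ^ (p - 1)) ^ j * ((1 / 2) ^ (j + 2)) ^ 2 := by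
      rw [← Real.rpow_pow_comm one_half_pos.le, hpow, mul_pow, ← pow_mul, ← pow_mul]; ring
    _ ≤ 16 * ((1 / 2 : ℝ) ^ (p - 1)) ^ j * a j ^ 2 := by gcongr

theorem geom_mul_sq_le_of_rpow_inv_le {p D r : ℝ} {j : ℕ} (hp : 1 ≤ p) (hD : 0 ≤ D) (hr : 0 ≤ r)
    (hj : r ^ p⁻¹ ≤ 2 ^ (j + 2) * D) :
    ((1 / 2 : ℝ) ^ (p - 1)) ^ j * r ^ 2 ≤ (4 * D) ^ (p - 1) * r ^ (1 + p⁻¹) := by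
  rcases hr.eq_or_lt with rfl | hr
  · rw [zero_pow two_ne_zero, mul_zero]; positivity
  have hsq : r ^ 2 = (r ^ p⁻¹) ^ (p - 1) * r ^ (1 + p⁻¹) := by
    rw [← Real.rpow_mul hr.le, ← Real.rpow_add hr, ← Real.rpow_natCast]
    congr 1
    field_simp
    push_cast
    ring
  have hlevel : (1 / 2 : ℝ) ^ j * r ^ p⁻¹ ≤ 4 * D := by
    calc (1 / 2 : ℝ) ^ j * r ^ p⁻¹ ≤ (1 / 2) ^ j * (2 ^ (j + 2) * D) := by gcongr
      _ = 4 * D := by rw [pow_add, ← mul_assoc, ← mul_assoc, ← mul_pow]; norm_num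
  calc ((1 / 2 : ℝ) ^ (p - 1)) ^ j * r ^ 2
      = ((1 / 2 : ℝ) ^ j * r ^ p⁻¹) ^ (p - 1) * r ^ (1 + p⁻¹) := by
        rw [hsq, Real.mul_rpow (by positivity) (by positivity),
          Real.rpow_pow_comm one_half_pos.le]
        ring
    _ ≤ (4 * D) ^ (p - 1) * r ^ (1 + p⁻¹) := by gcongr

theorem sum_filter_geom_mul_sq_le {p D r : ℝ} (hp : 1 < p) (hD : 0 ≤ D) (hr : 0 ≤ r) (N : ℕ) :
    ∑ j ∈ (Finset.range N).filter (fun j => r ^ p⁻¹ ≤ 2 ^ (j + 2) * D),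
        ((1 / 2 : ℝ) ^ (p - 1)) ^ j * r ^ 2 ≤
      (1 - (1 / 2 : ℝ) ^ (p - 1))⁻¹ * (4 * D) ^ (p - 1) * r ^ (1 + p⁻¹) := by
  set ρ := (1 / 2 : ℝ) ^ (p - 1)
  have hρ0 : 0 ≤ ρ := by positivity
  have hρ1 : ρ < 1 := Real.rpow_lt_one one_half_pos.le one_half_lt_one (by linarith)
  set T := (Finset.range N).filter (fun j => r ^ p⁻¹ ≤ 2 ^ (j + 2) * D)
  rcases T.eq_empty_or_nonempty with hT | hT
  · rw [hT, Finset.sum_empty]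
    have : 0 < 1 - ρ := by linarith
    positivity
  set j₁ := T.min' hT
  have hj₁ : r ^ p⁻¹ ≤ 2 ^ (j₁ + 2) * D := (Finset.mem_filter.1 (T.min'_mem hT)).2
  calc ∑ j ∈ T, ρ ^ j * r ^ 2 ≤ ∑ j ∈ Finset.Ico j₁ N, ρ ^ j * r ^ 2 := by
        refine Finset.sum_le_sum_of_subset_of_nonneg (fun j hj => ?_) fun j _ _ => by positivity
        exact Finset.mem_Ico.2 ⟨T.min'_le j hj,
          Finset.mem_range.1 (Finset.mem_filter.1 hj).1⟩
    _ ≤ ρ ^ j₁ / (1 - ρ) * r ^ 2 := by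
        rw [← Finset.sum_mul]
        gcongr
        exact geom_sum_Ico_le_of_lt_one hρ0 hρ1
    _ = (1 - ρ)⁻¹ * (ρ ^ j₁ * r ^ 2) := by ring
    _ ≤ (1 - ρ)⁻¹ * (4 * D) ^ (p - 1) * r ^ (1 + p⁻¹) := by
        rw [mul_assoc]
        exact mul_le_mul_of_nonneg_left (geom_mul_sq_le_of_rpow_inv_le hp.le hD hr hj₁)
          (inv_nonneg.2 (by linarith))

section Truncation

variable {X : Type*} [MeasurableSpace X] {μ : Measure X} {Φ : ℝ → ℝ} {p β : ℝ}

theorem mul_mul_le_of_lt_rpow_inv (hΦ : ∀ x, 0 ≤ x → β * x ^ (1 + p⁻¹) ≤ Φ x) (hβ : 0 ≤ β)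
    {L r : ℝ} (hr : 0 ≤ r) (hLr : L < r ^ p⁻¹) : β * L * r ≤ Φ r := by
  rcases hr.eq_or_lt with rfl | hr
  · rw [mul_zero]
    exact (by positivity : 0 ≤ β * (0 : ℝ) ^ (1 + p⁻¹)).trans (hΦ 0 le_rfl)
  calc β * L * r ≤ β * r ^ p⁻¹ * r := by gcongr
    _ = β * r ^ (1 + p⁻¹) := by rw [Real.rpow_add hr, Real.rpow_one]; ring
    _ ≤ Φ r := hΦ r hr.le

theorem memLp_indicator_rpow_inv_le [IsFiniteMeasure μ] {u : X → ℂ} (hum : Measurable u)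
    (hp : 0 < p) {L : ℝ} (hL : 0 ≤ L) (q : ℝ≥0∞) :
    MemLp ({x | ‖u x‖ ^ p⁻¹ ≤ L}.indicator u) q μ := by
  have hA : MeasurableSet {x | ‖u x‖ ^ p⁻¹ ≤ L} :=
    measurableSet_le (hum.norm.pow_const _) measurable_const
  refine .of_bound (hum.indicator hA).aestronglyMeasurable (L ^ p) (ae_of_all _ fun x => ?_)
  simp only [Set.indicator_apply]
  split_ifs with hx
  · exact (Real.rpow_inv_le_iff_of_pos (norm_nonneg _) hL hp).1 hx
  · rw [norm_zero]
    positivity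

theorem integral_norm_indicator_compl_le (hΦ : ∀ x, 0 ≤ x → β * x ^ (1 + p⁻¹) ≤ Φ x)
    (hβ : 0 < β) {L : ℝ} (hL : 0 < L) {u : X → ℂ} (hΦu : Integrable (fun x => Φ ‖u x‖) μ) :
    ∫ x, ‖{x | ‖u x‖ ^ p⁻¹ ≤ L}ᶜ.indicator u x‖ ∂μ ≤ (∫ x, Φ ‖u x‖ ∂μ) / (β * L) := by
  rw [← integral_div]
  refine integral_mono_of_nonneg (ae_of_all _ fun x => norm_nonneg _) (hΦu.div_const _)
    (ae_of_all _ fun x => ?_)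
  have hΦ0 : 0 ≤ Φ ‖u x‖ := (hΦ _ (norm_nonneg _)).trans' (by positivity)
  simp only [Set.indicator_apply, Set.mem_compl_iff]
  split_ifs with h
  · rw [norm_zero]
    positivity
  · rw [le_div_iff₀ (by positivity)]
    linarith [mul_mul_le_of_lt_rpow_inv hΦ hβ.le (norm_nonneg (u x)) (not_le.1 h)]

end Truncation

theorem sum_geom_mul_norm_indicator_sq_le {X : Type*} {Φ : ℝ → ℝ} {p β : ℝ}
    (hΦ : ∀ x, 0 ≤ x → β * x ^ (1 + p⁻¹) ≤ Φ x) (hβ : 0 < β) (hp : 1 < p) {D : ℝ} (hD : 0 ≤ D)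
    (u : X → ℂ) (N : ℕ) (x : X) :
    ∑ j ∈ Finset.range N, ((1 / 2 : ℝ) ^ (p - 1)) ^ j *
        ‖{x | ‖u x‖ ^ p⁻¹ ≤ 2 ^ (j + 2) * D}.indicator u x‖ ^ 2 ≤
      (1 - (1 / 2 : ℝ) ^ (p - 1))⁻¹ * (4 * D) ^ (p - 1) * (Φ ‖u x‖ / β) := by
  have hρ : (1 / 2 : ℝ) ^ (p - 1) < 1 :=
    Real.rpow_lt_one one_half_pos.le one_half_lt_one (by linarith)
  calc ∑ j ∈ Finset.range N, ((1 / 2 : ℝ) ^ (p - 1)) ^ j *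
        ‖{x | ‖u x‖ ^ p⁻¹ ≤ 2 ^ (j + 2) * D}.indicator u x‖ ^ 2
      = ∑ j ∈ (Finset.range N).filter (fun j => ‖u x‖ ^ p⁻¹ ≤ 2 ^ (j + 2) * D),
          ((1 / 2 : ℝ) ^ (p - 1)) ^ j * ‖u x‖ ^ 2 := by
        rw [Finset.sum_filter]
        refine Finset.sum_congr rfl fun j _ => ?_
        simp only [Set.indicator_apply, Set.mem_ofPred_eq]
        split_ifs <;> simp
    _ ≤ (1 - (1 / 2 : ℝ) ^ (p - 1))⁻¹ * (4 * D) ^ (p - 1) * ‖u x‖ ^ (1 + p⁻¹) :=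
        sum_filter_geom_mul_sq_le hp hD (norm_nonneg _) N
    _ ≤ (1 - (1 / 2 : ℝ) ^ (p - 1))⁻¹ * (4 * D) ^ (p - 1) * (Φ ‖u x‖ / β) := by
        have : 0 < 1 - (1 / 2 : ℝ) ^ (p - 1) := by linarith
        gcongr
        rw [le_div_iff₀ hβ, mul_comm]
        exact hΦ _ (norm_nonneg _)

namespace RepSystem

variable {X ι : Type*} [MeasurableSpace X] {μ : Measure X} {d k : ι → ℕ}
  {E : (π : ι) → X → Matrix (Fin (d π)) (Fin (d π)) ℂ} {Φ : ℝ → ℝ} {p β D : ℝ}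

theorem sum_mul_Ff_sq_le_integral_div (hsys : RepSystem μ d k E) (hβ : 0 < β)
    (hΦ : ∀ x, 0 ≤ x → β * x ^ 2 ≤ Φ x) {u : X → ℂ} (hum : Measurable u)
    (hΦu : Integrable (fun x => Φ ‖u x‖) μ) (S : Finset ι) :
    ∑ π ∈ S, (k π * d π : ℝ) * Ff μ k E u π ^ 2 ≤ (∫ x, Φ ‖u x‖ ∂μ) / β := by
  have hpt : ∀ x, ‖u x‖ ^ 2 ≤ Φ ‖u x‖ / β := fun x => by
    rw [le_div_iff₀ hβ, mul_comm]
    exact hΦ _ (norm_nonneg _)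
  have hu2 : MemLp u 2 μ := (memLp_two_iff_integrable_sq_norm hum.aestronglyMeasurable).2
    ((hΦu.div_const β).mono' (hum.norm.pow_const 2).aestronglyMeasurable
      (ae_of_all _ fun x => by rw [Real.norm_of_nonneg (by positivity)]; exact hpt x))
  calc ∑ π ∈ S, (k π * d π : ℝ) * Ff μ k E u π ^ 2 ≤ ∫ x, ‖u x‖ ^ 2 ∂μ :=
        hsys.sum_mul_Ff_sq_le hu2 S
    _ ≤ ∫ x, Φ ‖u x‖ / β ∂μ :=
        integral_mono_of_nonneg (ae_of_all _ fun x => by positivity) (hΦu.div_const β)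
          (ae_of_all _ hpt)
    _ = (∫ x, Φ ‖u x‖ ∂μ) / β := integral_div β _

theorem sum_mul_Ff_rpow_le_integral_sum (hsys : RepSystem μ d k E) {u : X → ℂ}
    {v : ℕ → X → ℂ} (hv : ∀ j, MemLp (v j) 2 μ) {ω : ℕ → ℝ} (hω : ∀ j, 0 ≤ ω j) {s : ℝ}
    (h : ∀ π, ∃ j, Ff μ k E u π ^ s ≤ ω j * Ff μ k E (v j) π ^ 2) (S : Finset ι) :
    ∃ N, ∑ π ∈ S, (k π * d π : ℝ) * Ff μ k E u π ^ s ≤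
      ∫ x, ∑ j ∈ Finset.range N, ω j * ‖v j x‖ ^ 2 ∂μ := by
  choose J hJ using h
  set N := S.sup J + 1
  refine ⟨N, ?_⟩
  calc ∑ π ∈ S, (k π * d π : ℝ) * Ff μ k E u π ^ s
      ≤ ∑ π ∈ S, ∑ j ∈ Finset.range N,
          ω j * ((k π * d π : ℝ) * Ff μ k E (v j) π ^ 2) := by
        refine Finset.sum_le_sum fun π hπ => ?_
        calc (k π * d π : ℝ) * Ff μ k E u π ^ s
            ≤ ω (J π) * ((k π * d π : ℝ) * Ff μ k E (v (J π)) π ^ 2) := by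
              rw [mul_left_comm]; gcongr; exact hJ π
          _ ≤ _ := Finset.single_le_sum (f := fun j => ω j * ((k π * d π : ℝ) *
              Ff μ k E (v j) π ^ 2)) (fun j _ => mul_nonneg (hω j) (by positivity))
              (Finset.mem_range.2 (Nat.lt_succ_of_le (Finset.le_sup hπ)))
    _ = ∑ j ∈ Finset.range N, ω j * ∑ π ∈ S, (k π * d π : ℝ) * Ff μ k E (v j) π ^ 2 := by
        rw [Finset.sum_comm]
        simp only [Finset.mul_sum]
    _ ≤ ∑ j ∈ Finset.range N, ω j * ∫ x, ‖v j x‖ ^ 2 ∂μ := by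
        gcongr with j
        · exact hω j
        · exact hsys.sum_mul_Ff_sq_le (hv j) S
    _ = ∫ x, ∑ j ∈ Finset.range N, ω j * ‖v j x‖ ^ 2 ∂μ := by
        rw [integral_finsetSum _ fun j _ => ((hv j).integrable_norm_pow two_ne_zero).const_mul _]
        simp only [integral_const_mul]

theorem Ff_indicator_compl_le (hsys : RepSystem μ d k E) (hβ : 0 < β) (hD : 0 < D)
    (hΦ : ∀ x, 0 ≤ x → β * x ^ (1 + p⁻¹) ≤ Φ x) {u : X → ℂ} (hum : Measurable u)
    (hu : Integrable u μ) (hΦu : Integrable (fun x => Φ ‖u x‖) μ)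
    (hmod : ∫ x, Φ ‖u x‖ ∂μ ≤ β * D) (j : ℕ) (π : ι) :
    Ff μ k E ({x | ‖u x‖ ^ p⁻¹ ≤ 2 ^ (j + 2) * D}ᶜ.indicator u) π ≤ (1 / 2) ^ (j + 2) := by
  have hA : MeasurableSet {x | ‖u x‖ ^ p⁻¹ ≤ 2 ^ (j + 2) * D} :=
    measurableSet_le (hum.norm.pow_const _) measurable_const
  calc Ff μ k E ({x | ‖u x‖ ^ p⁻¹ ≤ 2 ^ (j + 2) * D}ᶜ.indicator u) π
      ≤ ∫ x, ‖{x | ‖u x‖ ^ p⁻¹ ≤ 2 ^ (j + 2) * D}ᶜ.indicator u x‖ ∂μ :=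
        hsys.Ff_le_integral_norm (hu.indicator hA.compl) π
    _ ≤ (∫ x, Φ ‖u x‖ ∂μ) / (β * (2 ^ (j + 2) * D)) :=
        integral_norm_indicator_compl_le hΦ hβ (by positivity) hΦu
    _ ≤ (β * D) / (β * (2 ^ (j + 2) * D)) := by gcongr
    _ = (1 / 2) ^ (j + 2) := by field_simp; rw [← mul_pow]; norm_num

theorem sum_mul_Ff_rpow_le [IsFiniteMeasure μ] (hsys : RepSystem μ d k E) (hp : 1 < p)
    (hβ : 0 < β) (hD : 0 < D) (hΦ : ∀ x, 0 ≤ x → β * x ^ (1 + p⁻¹) ≤ Φ x) {u : X → ℂ}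
    (hum : Measurable u) (hu : Integrable u μ) (hΦu : Integrable (fun x => Φ ‖u x‖) μ)
    (hmod : ∫ x, Φ ‖u x‖ ∂μ ≤ β * D) (hF : ∀ π, Ff μ k E u π ≤ 1) (S : Finset ι) :
    ∑ π ∈ S, (k π * d π : ℝ) * Ff μ k E u π ^ (p + 1) ≤
      16 * ((1 - (1 / 2 : ℝ) ^ (p - 1))⁻¹ * (4 * D) ^ (p - 1) * D) := by
  set ρ := (1 / 2 : ℝ) ^ (p - 1)
  set K := (1 - ρ)⁻¹ * (4 * D) ^ (p - 1)
  set A : ℕ → Set X := fun j => {x | ‖u x‖ ^ p⁻¹ ≤ 2 ^ (j + 2) * D}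
  have hA : ∀ j, MeasurableSet (A j) := fun j =>
    measurableSet_le (hum.norm.pow_const _) measurable_const
  have hsplit : ∀ j π, Ff μ k E u π ≤
      Ff μ k E ((A j).indicator u) π + Ff μ k E ((A j)ᶜ.indicator u) π := fun j π => calc
    Ff μ k E u π = Ff μ k E ((A j).indicator u + (A j)ᶜ.indicator u) π := by
      rw [Set.indicator_self_add_compl]
    _ ≤ _ := hsys.Ff_add_le (hu.indicator (hA j)) (hu.indicator (hA j).compl) π
  obtain ⟨N, hN⟩ := hsys.sum_mul_Ff_rpow_le_integral_sum
    (fun j => memLp_indicator_rpow_inv_le hum (by linarith) (by positivity) 2)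
    (fun j => by positivity) (fun π => exists_rpow_le_mul_sq (p := p) (by linarith)
      (Ff_nonneg u π) (hF π) (hsplit · π)
      (hsys.Ff_indicator_compl_le hβ hD hΦ hum hu hΦu hmod · π)) S
  calc ∑ π ∈ S, (k π * d π : ℝ) * Ff μ k E u π ^ (p + 1)
      ≤ ∫ x, ∑ j ∈ Finset.range N, 16 * ρ ^ j * ‖(A j).indicator u x‖ ^ 2 ∂μ := hN
    _ = 16 * ∫ x, ∑ j ∈ Finset.range N, ρ ^ j * ‖(A j).indicator u x‖ ^ 2 ∂μ := by
        simp_rw [mul_assoc, ← Finset.mul_sum, integral_const_mul]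
    _ ≤ 16 * ∫ x, K * (Φ ‖u x‖ / β) ∂μ := by
        refine mul_le_mul_of_nonneg_left (integral_mono_of_nonneg
          (ae_of_all _ fun x => by positivity) ((hΦu.div_const _).const_mul _)
          (ae_of_all _ (sum_geom_mul_norm_indicator_sq_le hΦ hβ hp hD.le u N))) (by norm_num)
    _ ≤ 16 * (K * D) := by
        rw [integral_const_mul, integral_div]
        have : 0 ≤ K := mul_nonneg (inv_nonneg.2 (sub_nonneg.2
          (Real.rpow_le_one one_half_pos.le one_half_lt_one.le (by linarith)))) (by positivity)
        gcongr
        rwa [div_le_iff₀ hβ, mul_comm]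

theorem exists_sum_mul_Ff_rpow_le [IsFiniteMeasure μ] (hsys : RepSystem μ d k E) (hp : 1 ≤ p)
    (hβ : 0 < β) (hD : 0 < D) (hΦ : ∀ x, 0 ≤ x → β * x ^ (1 + p⁻¹) ≤ Φ x) :
    ∃ C, ∀ u : X → ℂ, Measurable u → Integrable u μ → Integrable (fun x => Φ ‖u x‖) μ →
      ∫ x, Φ ‖u x‖ ∂μ ≤ β * D → (∀ π, Ff μ k E u π ≤ 1) →
        ∀ S : Finset ι, ∑ π ∈ S, (k π * d π : ℝ) * Ff μ k E u π ^ (p + 1) ≤ C := by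
  rcases hp.eq_or_lt with rfl | hp
  · refine ⟨D, fun u hum _ hΦu hmod _ S => ?_⟩
    have hΦ2 : ∀ x, 0 ≤ x → β * x ^ 2 ≤ Φ x := fun x hx => by
      simpa [one_add_one_eq_two] using hΦ x hx
    calc ∑ π ∈ S, (k π * d π : ℝ) * Ff μ k E u π ^ ((1 : ℝ) + 1)
        = ∑ π ∈ S, (k π * d π : ℝ) * Ff μ k E u π ^ 2 := by norm_num
      _ ≤ (∫ x, Φ ‖u x‖ ∂μ) / β := hsys.sum_mul_Ff_sq_le_integral_div hβ hΦ2 hum hΦu S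
      _ ≤ D := by rwa [div_le_iff₀ hβ, mul_comm]
  · exact ⟨_, fun u hum hu hΦu hmod hF => hsys.sum_mul_Ff_rpow_le hp hβ hD hΦ hum hu hΦu hmod hF⟩

theorem Ff_le_one {Ψ : ℝ → ℝ} [IsProbabilityMeasure μ] (hsys : RepSystem μ d k E)
    (hpair : IsComplementaryPair Φ Ψ) (hnorm : Φ 1 + Ψ 1 = 1) {u : X → ℂ} (hu : Integrable u μ)
    (hΦu : Integrable (fun x => Φ ‖u x‖) μ) (hmod : ∫ x, Φ ‖u x‖ ∂μ ≤ Φ 1) (π : ι) :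
    Ff μ k E u π ≤ 1 := by
  linarith [hsys.Ff_le_integral_add hpair hu hΦu π]

theorem exists_sum_mul_Ff_div_rpow_le {Ψ : ℝ → ℝ} {c : ℝ} [IsProbabilityMeasure μ]
    (hsys : RepSystem μ d k E) (hpair : IsComplementaryPair Φ Ψ) (hnorm : Φ 1 + Ψ 1 = 1)
    (hp : 1 ≤ p) (hc : 0 < c) (hΨ : ∀ y, 0 ≤ y → Ψ y ≤ c * y ^ (p + 1)) :
    ∃ C, ∀ f : X → ℂ, Measurable f → ∀ B, (∀ x, ‖f x‖ ≤ B) → ∀ lam, 0 < lam →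
      ∫⁻ x, ENNReal.ofReal (Φ (|‖f x‖| / lam)) ∂μ ≤ ENNReal.ofReal (Φ 1) →
        (∀ π, Ff μ k E f π / lam ≤ 1) ∧
          ∀ S : Finset ι, ∑ π ∈ S, (k π * d π : ℝ) * (Ff μ k E f π / lam) ^ (p + 1) ≤ C := by
  set β := p / (p + 1) * (c * (p + 1)) ^ (-p⁻¹)
  have hβ : 0 < β := by positivity
  have hΦ : ∀ x, 0 ≤ x → β * x ^ (1 + p⁻¹) ≤ Φ x := fun x hx =>
    hpair.mul_rpow_le_of_le_mul_rpow (by linarith) hc hΨ hx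
  have hΦ1 : β ≤ Φ 1 := by simpa using hΦ 1 zero_le_one
  obtain ⟨C, hC⟩ :=
    hsys.exists_sum_mul_Ff_rpow_le hp hβ (D := Φ 1 / β) (div_pos (hβ.trans_le hΦ1) hβ) hΦ
  refine ⟨C, fun f hf B hfB lam hlam hmod => ?_⟩
  set u : X → ℂ := fun x => ((lam⁻¹ : ℝ) : ℂ) * f x
  have hnu : ∀ x, ‖u x‖ = |‖f x‖| / lam := fun x => by
    rw [norm_mul, Complex.norm_real, Real.norm_of_nonneg (by positivity), abs_norm, inv_mul_eq_div]
  have hum : Measurable u := hf.const_mul _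
  have hub : ∀ x, ‖u x‖ ≤ B / lam := fun x => by
    rw [hnu, abs_norm]; exact div_le_div_of_nonneg_right (hfB x) hlam.le
  have hu : Integrable u μ := .of_bound hum.aestronglyMeasurable _ (ae_of_all _ hub)
  have hΦu := hpair.1.integrable_comp_norm (μ := μ) hum.aestronglyMeasurable hub
  have hmodu : ∫ x, Φ ‖u x‖ ∂μ ≤ Φ 1 := by
    rw [← ENNReal.ofReal_le_ofReal_iff (by linarith), ofReal_integral_eq_lintegral_ofReal hΦu
      (ae_of_all _ fun x => hpair.1.nonneg _ (norm_nonneg _))]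
    simpa only [hnu] using hmod
  have hFu : ∀ π, Ff μ k E f π / lam = Ff μ k E u π := fun π => by
    rw [Ff_const_mul, Complex.norm_real, Real.norm_of_nonneg (by positivity), inv_mul_eq_div]
  have hF1 := hsys.Ff_le_one hpair hnorm hu hΦu hmodu
  simp only [hFu]
  exact ⟨hF1, hC u hum hu hΦu (by rwa [mul_div_cancel₀ _ hβ.ne']) hF1⟩

end RepSystem

theorem IsYoungFunction.exists_sum_le {ι : Type*} {Ψ : ℝ → ℝ} (hΨ : IsYoungFunction Ψ)
    {p c : ℝ} (hp : 0 ≤ p) (hpoly : ∀ y, 0 ≤ y → Ψ y ≤ c * y ^ (p + 1)) (C : ℝ) :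
    ∃ r, 0 < r ∧ ∀ (S : Finset ι) (w t : ι → ℝ), (∀ π ∈ S, 0 ≤ w π) →
      (∀ π ∈ S, 0 ≤ t π ∧ t π ≤ 1) → ∑ π ∈ S, w π * t π ^ (p + 1) ≤ C →
        ∑ π ∈ S, Ψ (t π / r) * w π ≤ Ψ 1 := by
  set r := max 1 (c * C / Ψ 1)
  have hr : 1 ≤ r := le_max_left _ _
  refine ⟨r, one_pos.trans_le hr, fun S w t hw ht hC => ?_⟩
  have hle : ∀ π ∈ S, 0 ≤ t π / r ∧ t π / r ≤ 1 := fun π hπ =>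
    ⟨div_nonneg (ht π hπ).1 (by linarith), div_le_one_of_le₀ ((ht π hπ).2.trans hr) (by linarith)⟩
  rcases (hΨ.nonneg 1 zero_le_one).eq_or_lt with hΨ1 | hΨ1
  · rw [← hΨ1]
    refine Finset.sum_nonpos fun π hπ => mul_nonpos_of_nonpos_of_nonneg ?_ (hw π hπ)
    exact hΨ1 ▸ hΨ.monotoneOn (hle π hπ).1 (Set.mem_Ici.2 zero_le_one) (hle π hπ).2
  have hc : 0 < c := hΨ1.trans_le (by simpa using hpoly 1 zero_le_one)
  have hrp : 0 < r ^ (p + 1) := by positivity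
  calc ∑ π ∈ S, Ψ (t π / r) * w π ≤ ∑ π ∈ S, c * (t π / r) ^ (p + 1) * w π :=
        Finset.sum_le_sum fun π hπ => by gcongr; exacts [hw π hπ, hpoly _ (hle π hπ).1]
    _ = c / r ^ (p + 1) * ∑ π ∈ S, w π * t π ^ (p + 1) := by
        rw [Finset.mul_sum]
        refine Finset.sum_congr rfl fun π hπ => ?_
        rw [Real.div_rpow (ht π hπ).1 (by linarith)]
        ring
    _ ≤ c / r ^ (p + 1) * C := by gcongr
    _ ≤ Ψ 1 := by
        rw [div_mul_eq_mul_div, div_le_iff₀ hrp]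
        calc c * C = Ψ 1 * (c * C / Ψ 1) := by field_simp
          _ ≤ Ψ 1 * r ^ (p + 1) := by
            gcongr
            exact (le_max_right _ _).trans (Real.self_le_rpow_of_one_le hr (by linarith))

theorem gaugeNorm_le_of_sum_le {ι : Type*} {d k : ι → ℕ} {Ψ : ℝ → ℝ} (hΨ : IsYoungFunction Ψ)
    {F : ι → ℝ} {S : Finset ι} (hF : ∀ π, 0 ≤ F π) (hFS : ∀ π ∉ S, F π = 0) {lam : ℝ}
    (hlam : 0 < lam) (h : ∑ π ∈ S, Ψ (F π / lam) * (k π * d π) ≤ Ψ 1) :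
    gaugeNorm d k Ψ F ≤ lam := by
  refine csInf_le ⟨0, fun _ hy => hy.1.le⟩ ⟨hlam, ?_⟩
  rw [tsum_eq_sum (s := S) fun π hπ => by simp [hFS π hπ, hΨ.zero]]
  refine le_of_eq_of_le ?_ (ENNReal.ofReal_le_ofReal h)
  have hΨF : ∀ π, 0 ≤ Ψ (F π / lam) := fun π => hΨ.nonneg _ (div_nonneg (hF π) hlam.le)
  rw [ENNReal.ofReal_sum_of_nonneg fun π _ => mul_nonneg (hΨF π) (by positivity)]
  refine Finset.sum_congr rfl fun π _ => ?_
  rw [← mul_assoc, ENNReal.ofReal_mul (by have := hΨF π; positivity), ENNReal.ofReal_mul (hΨF π),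
    ENNReal.ofReal_natCast, ENNReal.ofReal_natCast]

section Luxemburg

variable {X : Type*} [MeasurableSpace X] {μ : Measure X} {Φ : ℝ → ℝ} {f : X → ℂ}

theorem le_mul_luxNorm {a r : ℝ} (hr : 0 < r)
    (hne : ∃ lam, 0 < lam ∧ ∫⁻ x, ENNReal.ofReal (Φ (|‖f x‖| / lam)) ∂μ ≤ ENNReal.ofReal (Φ 1))
    (h : ∀ lam, 0 < lam → ∫⁻ x, ENNReal.ofReal (Φ (|‖f x‖| / lam)) ∂μ ≤ ENNReal.ofReal (Φ 1) →
      a ≤ r * lam) : a ≤ r * luxNorm μ Φ f := by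
  rw [← div_le_iff₀' hr]
  exact le_csInf hne fun lam hlam => (div_le_iff₀' hr).2 (h lam hlam.1 hlam.2)

theorem IsYoungFunction.lintegral_le_of_norm_le [IsProbabilityMeasure μ]
    (hΦ : IsYoungFunction Φ) {B : ℝ} (hB : 0 < B) (hf : ∀ x, ‖f x‖ ≤ B) :
    ∫⁻ x, ENNReal.ofReal (Φ (|‖f x‖| / B)) ∂μ ≤ ENNReal.ofReal (Φ 1) := by
  calc ∫⁻ x, ENNReal.ofReal (Φ (|‖f x‖| / B)) ∂μ ≤ ∫⁻ _, ENNReal.ofReal (Φ 1) ∂μ :=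
        lintegral_mono fun x => ENNReal.ofReal_le_ofReal <| hΦ.monotoneOn
          (Set.mem_Ici.2 (by positivity))
          (Set.mem_Ici.2 zero_le_one) (by rw [abs_norm, div_le_one hB]; exact hf x)
    _ = ENNReal.ofReal (Φ 1) := by simp

end Luxemburg

theorem key_lemma_general
    {X : Type*} [MeasurableSpace X] {ι : Type*}
    (μ : Measure X) [IsProbabilityMeasure μ]
    (d k : ι → ℕ) (E : (π : ι) → X → Matrix (Fin (d π)) (Fin (d π)) ℂ)
    (hsys : RepSystem μ d k E)
    (Φ Ψ : ℝ → ℝ) (hpair : IsComplementaryPair Φ Ψ)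
    (hnorm : Φ 1 + Ψ 1 = 1)
    (p c₀ : ℝ) (hp : 1 ≤ p) (hc₀ : 0 < c₀)
    (hΨ' : ∀ t : ℝ, 0 ≤ t → deriv Ψ t ≤ c₀ * t ^ p) :
    ∃ r₀ : ℝ, 0 < r₀ ∧
      ∀ (Λ : Finset ι) (c : (π : ι) → Matrix (Fin (d π)) (Fin (d π)) ℂ),
        gaugeNorm d k Ψ (Ff μ k E (trigPoly E Λ c)) ≤ r₀ * luxNorm μ Φ (trigPoly E Λ c) := by
  have hΨ : ∀ y, 0 ≤ y → Ψ y ≤ c₀ * 2 ^ p * y ^ (p + 1) := fun y hy =>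
    hpair.2.1.le_mul_rpow_of_deriv_le (by linarith) hc₀.le hΨ' hy
  obtain ⟨C, hC⟩ := hsys.exists_sum_mul_Ff_div_rpow_le hpair hnorm hp (by positivity) hΨ
  obtain ⟨r₀, hr₀, hr₀C⟩ := hpair.2.1.exists_sum_le (ι := ι) (by linarith) hΨ C
  refine ⟨r₀, hr₀, fun Λ c => ?_⟩
  obtain ⟨B, hB, hfB⟩ := hsys.exists_norm_trigPoly_le Λ c
  refine le_mul_luxNorm hr₀ ⟨B, hB, hpair.1.lintegral_le_of_norm_le hB hfB⟩
    fun lam hlam hmod => ?_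
  obtain ⟨hF1, hsum⟩ := hC _ (hsys.measurable_trigPoly Λ c) B hfB lam hlam hmod
  refine gaugeNorm_le_of_sum_le hpair.2.1 (Ff_nonneg _)
    (fun π hπ => hsys.Ff_trigPoly_of_notMem c hπ) (by positivity) ?_
  simp_rw [mul_comm r₀ lam, ← div_div]
  exact hr₀C Λ _ _ (fun π _ => by positivity)
    (fun π _ => ⟨div_nonneg (Ff_nonneg _ _) hlam.le, hF1 π⟩) (hsum Λ)

/-- **Key Lemma** (Lemma 3.1): Let `G/K` be a compact homogeneous manifold with
normalized measure `μ` and `(Φ, Ψ)` a normalized complementary pair of continuous Young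
functions with (i) `Φ ≺ Φ₀` where `Φ₀(t) = t²/2`, and (ii) `Ψ′(t) ≤ c₀ t^p` for all
`t ≥ 0` for some `p ≥ 1`, `c₀ > 0`. Then there is `r̄₀ > 0`, independent of `Λ`, such that
for every finite `Λ ⊂ Ĝ₀` and every trigonometric polynomial
`f_Λ = ∑_{π∈Λ} d_π ∑_{i,j} c^π_{ij} π_{ij}` one has `N_Ψ(F_{f_Λ}) ≤ r̄₀ N_Φ(f_Λ)`. -/
theorem key_lemma
    {X : Type*} [MeasurableSpace X] {ι : Type*}
    (μ : Measure X) [IsProbabilityMeasure μ]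
    (d k : ι → ℕ) (E : (π : ι) → X → Matrix (Fin (d π)) (Fin (d π)) ℂ)
    (hsys : RepSystem μ d k E)
    (Φ Ψ : ℝ → ℝ) (hpair : IsComplementaryPair Φ Ψ)
    (hΦc : ContinuousOn Φ (Set.Ici 0)) (hΨc : ContinuousOn Ψ (Set.Ici 0))
    (hnorm : Φ 1 + Ψ 1 = 1)
    (hΦ₀ : YoungPrec Φ (fun t => t ^ 2 / 2))
    (p c₀ : ℝ) (hp : 1 ≤ p) (hc₀ : 0 < c₀)
    (hΨ' : ∀ t : ℝ, 0 ≤ t → deriv Ψ t ≤ c₀ * t ^ p) :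
    ∃ r₀ : ℝ, 0 < r₀ ∧
      ∀ (Λ : Finset ι) (c : (π : ι) → Matrix (Fin (d π)) (Fin (d π)) ℂ),
        gaugeNorm d k Ψ (Ff μ k E (trigPoly E Λ c)) ≤ r₀ * luxNorm μ Φ (trigPoly E Λ c) :=
  key_lemma_general μ d k E hsys Φ Ψ hpair hnorm p c₀ hp hc₀ hΨ'
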